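/- Gluing formula for the tree polynomial: if H is the graph obtained by gluing graphs G₁ and G₂ along a k-clique K, then τ_H · τ_K = τ_{G₁} · τ_{G₂}. -/

import Mathlib

open Polynomial

noncomputable section
open scoped Classical

/-- The weighted chromatic symmetric function of a (vertex-weighted) finite simple graph,
as a formal power series in the variables `x_0, x_1, x_2, …`: the coefficient of a monomial
`d` is the number of proper colourings `κ : V → ℕ` such that for each colour `i`, the total
weight of vertices coloured `i` is `d i`. -/
def wcsf {V : Type} [Fintype V] (G : SimpleGraph V) (ω : V → ℕ) : MvPowerSeries ℕ ℚ :=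
  fun d => (Nat.card {κ : V → ℕ // (∀ u v, G.Adj u v → κ u ≠ κ v) ∧
    ∀ i : ℕ, ∑ v ∈ Finset.univ.filter (fun v => κ v = i), ω v = d i} : ℚ)

/-- The (unweighted) chromatic symmetric function. -/
def csf {V : Type} [Fintype V] (G : SimpleGraph V) : MvPowerSeries ℕ ℚ :=
  wcsf G (fun _ => 1)

/-- `XP μ` is the chromatic symmetric function of the disjoint union of paths whose sizes are
given by the multiset `μ` (the chromatic symmetric function is multiplicative over disjoint
unions). -/
def XP (μ : Multiset ℕ) : MvPowerSeries ℕ ℚ :=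
  (μ.map (fun m => csf (SimpleGraph.pathGraph m))).prod

/-- The power-sum symmetric function `p_n = Σ_i x_i^n`. -/
def psum (n : ℕ) : MvPowerSeries ℕ ℚ :=
  fun d => if ∃ i, d = Finsupp.single i n then 1 else 0

/-- The power-sum symmetric function `p_μ`. -/
def pp (μ : Multiset ℕ) : MvPowerSeries ℕ ℚ := (μ.map psum).prod

/-- `P` is the chromatic polynomial of `G`: `P(k)` counts proper `k`-colourings for all
positive integers `k`. -/
def IsChromaticPoly {V : Type} [Fintype V] (G : SimpleGraph V) (P : Polynomial ℚ) : Prop :=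
  ∀ k : ℕ, 0 < k → P.eval (k : ℚ) =
    Nat.card {c : V → Fin k // ∀ u v, G.Adj u v → c u ≠ c v}

/-- The polynomial `Σ_λ a_λ x^{ℓ(λ)}` built from coefficients `a` indexed by partitions of
`n`; when `a` gives the path-basis coefficients of `X_G` this is the tree polynomial `τ_G`,
and when `a` gives the power-sum coefficients it is the chromatic polynomial. -/
def basisPoly (n : ℕ) (a : n.Partition → ℚ) : Polynomial ℚ :=
  ∑ l : n.Partition, Polynomial.C (a l) * Polynomial.X ^ l.parts.card

/-!
Specialise the symmetric functions at `x_0 = ⋯ = x_{m-1} = 1` and `x_i = 0` for `i ≥ m`,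
keeping only the homogeneous part of degree `|V|`. This turns `X_G` into the number `χ_G(m)` of
proper `m`-colourings of `G` and the path basis element `X_{P_λ}` into
`∏_{a ∈ λ} m (m - 1)^(a - 1) = (m / (m - 1))^ℓ(λ) (m - 1)^|λ|`, so
`τ_G(m / (m - 1)) (m - 1)^|V| = χ_G(m)`.

A colouring of `H` is a pair of colourings of `G₁` and `G₂` that agree on the clique `K`. The
colours on `K` are pairwise distinct, so up to a permutation of the colours there is only one
colouring of `K`. The number of ways to extend it to `G₂` is therefore the same for every
colouring of `K`, which gives `χ_H χ_K = χ_{G₁} χ_{G₂}`. Since `|H| + k = |G₁| + |G₂|`, the two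
sides of the claimed identity agree at the infinitely many points `m / (m - 1)`, `m ≥ 2`.
-/

theorem Finset.mem_finsuppAntidiag_iff_degree {σ : Type*} [DecidableEq σ] {s : Finset σ} {n : ℕ}
    {d : σ →₀ ℕ} :
    d ∈ s.finsuppAntidiag n ↔ d.degree = n ∧ d.support ⊆ s :=
  Finset.mem_finsuppAntidiag'

theorem Nat.cast_sub_one_ne_zero {K : Type*} [AddGroupWithOne K] [CharZero K] {m : ℕ}
    (hm : 2 ≤ m) : (m : K) - 1 ≠ 0 := by
  rw [sub_ne_zero]
  exact_mod_cast (by omega : m ≠ 1)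

theorem Polynomial.eq_of_forall_eval_div_sub_one_eq {K : Type*} [Field K] [CharZero K]
    {p q : K[X]} (h : ∀ m : ℕ, 2 ≤ m → p.eval ((m : K) / (m - 1)) = q.eval ((m : K) / (m - 1))) :
    p = q := by
  refine eq_of_infinite_eval_eq p q (Set.infinite_of_injective_forall_mem
    (f := fun j : ℕ => ((j + 2 : ℕ) : K) / ((j + 2 : ℕ) - 1)) (fun a b hab => ?_)
    fun j => h (j + 2) (by omega))
  rw [div_eq_div_iff (Nat.cast_sub_one_ne_zero (by omega)) (Nat.cast_sub_one_ne_zero (by omega))]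
    at hab
  push_cast at hab
  exact_mod_cast (by linear_combination -hab : (a : K) = b)

theorem Multiset.prod_map_mul_pow_pred {K : Type*} [Field K] (x : K) {y : K} (hy : y ≠ 0)
    {μ : Multiset ℕ} (hμ : ∀ a ∈ μ, 0 < a) :
    (μ.map fun a => x * y ^ (a - 1)).prod = (x / y) ^ Multiset.card μ * y ^ μ.sum := by
  induction μ using Multiset.induction_on with
  | empty => simp
  | cons a μ ih =>
    obtain ⟨r, rfl⟩ := Nat.exists_eq_add_one.mpr (hμ a (Multiset.mem_cons_self a μ))
    rw [Multiset.map_cons, Multiset.prod_cons, ih fun b hb => hμ b (Multiset.mem_cons_of_mem hb),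
      Multiset.card_cons, Multiset.sum_cons, Nat.add_sub_cancel]
    linear_combination -((x / y) ^ Multiset.card μ * y ^ μ.sum * y ^ r) * div_mul_cancel₀ x hy

namespace MvPowerSeries

variable {σ R : Type*} [CommSemiring R]

theorem isHomogeneous_one : (1 : MvPowerSeries σ R).IsHomogeneous 0 := by
  intro d hd
  rw [coeff_one] at hd
  split_ifs at hd with h
  · rw [h, map_zero]
  · exact absurd rfl hd

variable [DecidableEq σ]

/-- The degree-`n` part of a power series, evaluated at `x_i = 1` for `i ∈ s` and `x_i = 0`
for `i ∉ s`. -/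
def evalIndicator (s : Finset σ) (n : ℕ) : MvPowerSeries σ R →ₗ[R] R :=
  ∑ d ∈ s.finsuppAntidiag n, coeff d

theorem evalIndicator_apply (s : Finset σ) (n : ℕ) (F : MvPowerSeries σ R) :
    evalIndicator s n F = ∑ d ∈ s.finsuppAntidiag n, coeff d F :=
  LinearMap.sum_apply _ _ _

theorem evalIndicator_one (s : Finset σ) : evalIndicator s 0 (1 : MvPowerSeries σ R) = 1 := by
  simp [evalIndicator_apply]

theorem evalIndicator_mul (s : Finset σ) {F G : MvPowerSeries σ R} {p q : ℕ}
    (hF : F.IsHomogeneous p) (hG : G.IsHomogeneous q) :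
    evalIndicator s (p + q) (F * G) = evalIndicator s p F * evalIndicator s q G := by
  simp only [evalIndicator_apply, coeff_mul, Finset.sum_mul_sum, ← Finset.sum_product',
    Finset.sum_sigma']
  -- A pair `(x, y)` contributes only if `deg x = p` and `deg y = q`, and then `x + y` is
  -- supported in `s` iff both `x` and `y` are.
  refine Finset.sum_bij_ne_zero (fun z _ _ => z.2) ?_ ?_ ?_ (fun _ _ _ => rfl)
  · rintro ⟨d, x, y⟩ hz hne
    simp only [Finset.mem_sigma, Finset.HasAntidiagonal.mem_antidiagonal,
      Finset.mem_finsuppAntidiag_iff_degree] at hz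
    obtain ⟨⟨-, hs⟩, rfl⟩ := hz
    simp only [Finset.mem_product, Finset.mem_finsuppAntidiag_iff_degree]
    refine ⟨⟨?_, ?_⟩, ?_, ?_⟩
    · by_contra h
      exact left_ne_zero_of_mul hne (hF.coeff_eq_zero h)
    · exact (Finsupp.support_mono le_self_add).trans hs
    · by_contra h
      exact right_ne_zero_of_mul hne (hG.coeff_eq_zero h)
    · exact (Finsupp.support_mono le_add_self).trans hs
  · rintro ⟨d, x⟩ hz - ⟨d', x'⟩ hz' - (rfl : x = x')
    simp only [Finset.mem_sigma, Finset.HasAntidiagonal.mem_antidiagonal] at hz hz'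
    rw [← hz.2, ← hz'.2]
  · rintro ⟨x, y⟩ hxy hne
    simp only [Finset.mem_product, Finset.mem_finsuppAntidiag_iff_degree] at hxy
    refine ⟨⟨x + y, x, y⟩, ?_, hne, rfl⟩
    simp only [Finset.mem_sigma, Finset.HasAntidiagonal.mem_antidiagonal,
      Finset.mem_finsuppAntidiag_iff_degree, map_add, hxy.1.1, hxy.2.1, true_and, and_true]
    exact Finsupp.support_add.trans (Finset.union_subset hxy.1.2 hxy.2.2)

end MvPowerSeries

namespace SimpleGraph

variable {V α : Type*} {G : SimpleGraph V}

abbrev Coloring.restrictOfLE {s t : Set V} (c : (G.induce t).Coloring α) (h : s ⊆ t) :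
    (G.induce s).Coloring α :=
  c.comp (G.induceHomOfLE h).toHom

theorem Coloring.injective_of_isClique {s : Set V} (hs : G.IsClique s)
    (c : (G.induce s).Coloring α) : Function.Injective c := by
  intro x y hxy
  by_contra hne
  exact c.valid (hs x.2 y.2 (Subtype.coe_ne_coe.mpr hne)) hxy

/-- Any two injections into `α` differ by a permutation of `α`, and recolouring by it moves
one fibre of the restriction map onto the other. -/
theorem card_fiber_restrictOfLE_eq_of_isClique [Finite α] {s t : Set V}
    (hst : s ⊆ t) (hs : G.IsClique s) (y z : (G.induce s).Coloring α) :
    Nat.card {c : (G.induce t).Coloring α // c.restrictOfLE hst = y} =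
      Nat.card {c : (G.induce t).Coloring α // c.restrictOfLE hst = z} := by
  have hy := y.injective_of_isClique hs
  have hz := z.injective_of_isClique hs
  set σ : Equiv.Perm α :=
    ((Equiv.ofInjective y hy).symm.trans (Equiv.ofInjective z hz)).extendSubtype
  have hσ : ∀ x, σ (y x) = z x := fun x => by
    simp [σ, Equiv.extendSubtype_apply_of_mem _ _ (Set.mem_range_self x),
      Equiv.ofInjective_symm_apply]
  refine Nat.card_congr (Equiv.subtypeEquiv ((G.induce t).recolorOfEquiv σ) fun c => ?_)
  simp only [RelHom.ext_iff, RelHom.comp_apply]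
  refine forall_congr' fun x => ?_
  rw [← hσ]
  exact σ.injective.eq_iff.symm

section Gluing

variable {W : Type*} {H : SimpleGraph W} {A B : Set W}

def glueFun (hcover : A ∪ B = Set.univ) (c₁ : A → α) (c₂ : B → α) (w : W) : α :=
  if hw : w ∈ A then c₁ ⟨w, hw⟩
  else c₂ ⟨w, (hcover.symm ▸ Set.mem_univ w : w ∈ A ∪ B).resolve_left hw⟩

theorem glueFun_of_mem_left (hcover : A ∪ B = Set.univ) (c₁ : A → α) (c₂ : B → α) {w : W}
    (hw : w ∈ A) : glueFun hcover c₁ c₂ w = c₁ ⟨w, hw⟩ :=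
  dif_pos hw

theorem glueFun_of_mem_right (hcover : A ∪ B = Set.univ) {c₁ : A → α} {c₂ : B → α}
    (hagree : ∀ w (h₁ : w ∈ A) (h₂ : w ∈ B), c₁ ⟨w, h₁⟩ = c₂ ⟨w, h₂⟩) {w : W} (hw : w ∈ B) :
    glueFun hcover c₁ c₂ w = c₂ ⟨w, hw⟩ := by
  unfold glueFun
  split_ifs with hA
  · exact hagree w hA hw
  · rfl

def coloringEquivOfCover (hcover : A ∪ B = Set.univ)
    (hedges : ∀ u v, H.Adj u v → (u ∈ A ∧ v ∈ A) ∨ (u ∈ B ∧ v ∈ B)) :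
    H.Coloring α ≃ {p : (H.induce A).Coloring α × (H.induce B).Coloring α //
      p.2.restrictOfLE Set.inter_subset_right = p.1.restrictOfLE Set.inter_subset_left} where
  toFun c := ⟨(c.comp (Embedding.induce A).toHom, c.comp (Embedding.induce B).toHom), rfl⟩
  invFun p :=
    have hagree : ∀ w (h₁ : w ∈ A) (h₂ : w ∈ B), p.1.1 ⟨w, h₁⟩ = p.1.2 ⟨w, h₂⟩ :=
      fun w h₁ h₂ => (DFunLike.congr_fun p.2 ⟨w, h₁, h₂⟩).symm
    Coloring.mk (glueFun hcover p.1.1 p.1.2) fun {u v} huv => by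
      rcases hedges u v huv with ⟨hu, hv⟩ | ⟨hu, hv⟩
      · rw [glueFun_of_mem_left hcover _ _ hu, glueFun_of_mem_left hcover _ _ hv]
        exact p.1.1.valid huv
      · rw [glueFun_of_mem_right hcover hagree hu, glueFun_of_mem_right hcover hagree hv]
        exact p.1.2.valid huv
  left_inv c := by
    ext w
    by_cases hw : w ∈ A
    · exact glueFun_of_mem_left hcover _ _ hw
    · exact dif_neg hw
  right_inv p := by
    have hagree : ∀ w (h₁ : w ∈ A) (h₂ : w ∈ B), p.1.1 ⟨w, h₁⟩ = p.1.2 ⟨w, h₂⟩ :=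
      fun w h₁ h₂ => (DFunLike.congr_fun p.2 ⟨w, h₁, h₂⟩).symm
    ext ⟨w, hw⟩
    · exact glueFun_of_mem_left hcover _ _ hw
    · exact glueFun_of_mem_right hcover hagree hw

theorem card_coloring_mul_card_coloring_induce_inter [Fintype W] [Fintype α]
    (hcover : A ∪ B = Set.univ) (hedges : ∀ u v, H.Adj u v → (u ∈ A ∧ v ∈ A) ∨ (u ∈ B ∧ v ∈ B))
    (hclique : H.IsClique (A ∩ B)) :
    Nat.card (H.Coloring α) * Nat.card ((H.induce (A ∩ B)).Coloring α) =
      Nat.card ((H.induce A).Coloring α) * Nat.card ((H.induce B).Coloring α) := by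
  let fiber := fun y : (H.induce (A ∩ B)).Coloring α =>
    Nat.card {c : (H.induce B).Coloring α // c.restrictOfLE Set.inter_subset_right = y}
  have hfiber : ∀ y z, fiber y = fiber z :=
    card_fiber_restrictOfLE_eq_of_isClique Set.inter_subset_right hclique
  have hH : Nat.card (H.Coloring α) =
      ∑ c : (H.induce A).Coloring α, fiber (c.restrictOfLE Set.inter_subset_left) := by
    rw [Nat.card_congr ((coloringEquivOfCover hcover hedges).trans
      (Equiv.subtypeProdEquivSigmaSubtype
        fun (c₁ : (H.induce A).Coloring α) (c₂ : (H.induce B).Coloring α) =>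
          c₂.restrictOfLE Set.inter_subset_right = c₁.restrictOfLE Set.inter_subset_left)),
      Nat.card_sigma]
  have hB : Nat.card ((H.induce B).Coloring α) = ∑ y, fiber y := by
    rw [← Nat.card_sigma, Nat.card_congr (Equiv.sigmaFiberEquiv _)]
  clear_value fiber
  rw [hH, hB]
  calc (∑ c : (H.induce A).Coloring α, fiber (c.restrictOfLE Set.inter_subset_left)) *
        Nat.card ((H.induce (A ∩ B)).Coloring α)
      = ∑ _c : (H.induce A).Coloring α, ∑ y, fiber y := by
        rw [Finset.sum_mul]
        refine Finset.sum_congr rfl fun c _ => ?_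
        rw [Finset.sum_congr rfl fun y _ => hfiber y _, Finset.sum_const, Finset.card_univ,
          smul_eq_mul, Nat.card_eq_fintype_card, mul_comm]
    _ = Nat.card ((H.induce A).Coloring α) * ∑ y, fiber y := by
        rw [Finset.sum_const, Finset.card_univ, smul_eq_mul, Nat.card_eq_fintype_card]

theorem card_coloring_mul_card_coloring_completeGraph {V₁ V₂ : Type*} [Fintype W] [Fintype α]
    {G₁ : SimpleGraph V₁} {G₂ : SimpleGraph V₂} {k : ℕ} (f₁ : G₁ ↪g H) (f₂ : G₂ ↪g H)
    (hcover : Set.range f₁ ∪ Set.range f₂ = Set.univ)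
    (hedges : ∀ u v, H.Adj u v →
      (u ∈ Set.range f₁ ∧ v ∈ Set.range f₁) ∨ (u ∈ Set.range f₂ ∧ v ∈ Set.range f₂))
    (hclique : H.IsClique (Set.range f₁ ∩ Set.range f₂))
    (hk : (Set.range f₁ ∩ Set.range f₂).ncard = k) :
    Nat.card (H.Coloring α) * Nat.card ((completeGraph (Fin k)).Coloring α) =
      Nat.card (G₁.Coloring α) * Nat.card (G₂.Coloring α) := by
  have e : Fin k ≃ ↥(Set.range f₁ ∩ Set.range f₂) :=
    (Finite.equivFinOfCardEq (by rw [Nat.card_coe_set_eq, hk])).symm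
  rw [Nat.card_congr (coloringCongr f₁.isoInduceRange (.refl α)),
    Nat.card_congr (coloringCongr f₂.isoInduceRange (.refl α)),
    Nat.card_congr (coloringCongr (Iso.completeGraph e) (.refl α)),
    show completeGraph _ = H.induce _ from (induce_eq_top.mpr hclique).symm]
  exact card_coloring_mul_card_coloring_induce_inter hcover hedges hclique

end Gluing

section Path

theorem pathGraph_coloring_valid_iff {r : ℕ} {c : Fin (r + 1) → α} :
    (∀ {u v}, (pathGraph (r + 1)).Adj u v → c u ≠ c v) ↔
      ∀ i : Fin r, c i.castSucc ≠ c i.succ := by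
  refine ⟨fun h i => h (pathGraph_adj.mpr (Or.inl (by simp))), fun h u v huv => ?_⟩
  rcases pathGraph_adj.mp huv with huv | huv
  · have := h ⟨u, by omega⟩
    rwa [show Fin.castSucc ⟨u, _⟩ = u from Fin.ext rfl, show Fin.succ ⟨u, _⟩ = v from
      Fin.ext huv] at this
  · have := h ⟨v, by omega⟩
    rwa [show Fin.castSucc ⟨v, _⟩ = v from Fin.ext rfl, show Fin.succ ⟨v, _⟩ = u from
      Fin.ext huv, ne_comm] at this

abbrev ConsecutiveDistinct (α : Type*) (r : ℕ) : Type _ :=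
  {c : Fin (r + 1) → α // ∀ i : Fin r, c i.castSucc ≠ c i.succ}

def pathGraphColoringEquiv (r : ℕ) :
    (pathGraph (r + 1)).Coloring α ≃ ConsecutiveDistinct α r where
  toFun c := ⟨c, pathGraph_coloring_valid_iff.mp c.valid⟩
  invFun c := Coloring.mk c.1 (pathGraph_coloring_valid_iff.mpr c.2)
  left_inv _ := rfl
  right_inv _ := rfl

def ConsecutiveDistinct.snocEquiv (r : ℕ) :
    ConsecutiveDistinct α (r + 1) ≃
      {p : ConsecutiveDistinct α r × α // p.2 ≠ p.1.1 (Fin.last r)} where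
  toFun c := ⟨(⟨Fin.init c.1, fun i => by
      simpa only [Fin.init, Fin.succ_castSucc] using c.2 i.castSucc⟩, c.1 (Fin.last _)),
    (c.2 (Fin.last r)).symm⟩
  invFun p := ⟨Fin.snoc p.1.1.1 p.1.2, fun i => by
    induction i using Fin.lastCases with
    | last => simpa using p.2.symm
    | cast j => simpa only [Fin.succ_castSucc, Fin.snoc_castSucc] using p.1.1.2 j⟩
  left_inv c := by simp
  right_inv p := Subtype.ext (Prod.ext (Subtype.ext (by simp)) (by simp))

theorem card_pathGraph_coloring [Fintype α] (r : ℕ) :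
    Nat.card ((pathGraph (r + 1)).Coloring α) = Nat.card α * (Nat.card α - 1) ^ r := by
  rw [Nat.card_congr (pathGraphColoringEquiv r)]
  induction r with
  | zero =>
    exact (Nat.card_congr ((Equiv.subtypeUnivEquiv fun _ i => i.elim0).trans
      (Equiv.funUnique (Fin 1) α))).trans (mul_one _).symm
  | succ r ih =>
    rw [Nat.card_congr ((ConsecutiveDistinct.snocEquiv r).trans
      (Equiv.subtypeProdEquivSigmaSubtype fun (c : ConsecutiveDistinct α r) x =>
        x ≠ c.1 (Fin.last r))), Nat.card_sigma]
    simp only [Nat.card_eq_fintype_card, Fintype.card_subtype_compl, Fintype.card_subtype_eq,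
      Finset.sum_const, Finset.card_univ, smul_eq_mul] at ih ⊢
    rw [ih, pow_succ, mul_assoc]

end Path

end SimpleGraph

section ChromaticSymmetric

open Finset MvPowerSeries SimpleGraph

variable {V : Type} [Fintype V]

/-- The exponent vector of the monomial `∏ v, x_{κ v}` contributed by a colouring `κ`. -/
def coloringExponent (κ : V → ℕ) : ℕ →₀ ℕ := ∑ v, Finsupp.single (κ v) 1

theorem coloringExponent_apply (κ : V → ℕ) (i : ℕ) :
    coloringExponent κ i = #{v | κ v = i} := by
  simp [coloringExponent, Finsupp.finsetSum_apply, Finsupp.single_apply, Finset.sum_boole]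

theorem degree_coloringExponent (κ : V → ℕ) :
    (coloringExponent κ).degree = Fintype.card V := by
  simp [coloringExponent, map_sum]

theorem mem_support_coloringExponent (κ : V → ℕ) (v : V) :
    κ v ∈ (coloringExponent κ).support := by
  rw [Finsupp.mem_support_iff, coloringExponent_apply, ← Nat.pos_iff_ne_zero, card_pos]
  exact ⟨v, by simp⟩

theorem support_coloringExponent_subset (κ : V → ℕ) :
    (coloringExponent κ).support ⊆ univ.image κ := by
  intro i hi
  rw [Finsupp.mem_support_iff, coloringExponent_apply, ← Nat.pos_iff_ne_zero, card_pos] at hi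
  obtain ⟨v, hv⟩ := hi
  exact mem_image.mpr ⟨v, mem_univ v, (mem_filter.mp hv).2⟩

theorem coeff_csf (G : SimpleGraph V) (d : ℕ →₀ ℕ) :
    coeff d (csf G) =
      Nat.card {κ : V → ℕ // (∀ u v, G.Adj u v → κ u ≠ κ v) ∧ coloringExponent κ = d} := by
  refine congrArg Nat.cast (Nat.card_congr (Equiv.subtypeEquivRight fun κ => and_congr_right
    fun _ => ?_))
  simp only [sum_const, smul_eq_mul, mul_one, Finsupp.ext_iff, coloringExponent_apply]

theorem isHomogeneous_csf (G : SimpleGraph V) : (csf G).IsHomogeneous (Fintype.card V) := by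
  intro d hd
  rw [coeff_csf, Nat.cast_ne_zero, Nat.card_ne_zero] at hd
  obtain ⟨⟨⟨κ, -, rfl⟩⟩, -⟩ := hd
  rw [← degree_coloringExponent κ, Finsupp.degree_eq_weight_one]
  rfl

def properColoringEquivOfSupport (G : SimpleGraph V) {m : ℕ} {d : ℕ →₀ ℕ}
    (hd : d.support ⊆ range m) :
    {κ : V → ℕ // (∀ u v, G.Adj u v → κ u ≠ κ v) ∧ coloringExponent κ = d} ≃
      {c : G.Coloring (Fin m) // coloringExponent (fun v => (c v : ℕ)) = d} where
  toFun κ := ⟨Coloring.mk (fun v => ⟨κ.1 v, mem_range.mp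
      (hd (κ.2.2 ▸ mem_support_coloringExponent κ.1 v :))⟩)
      fun huv h => κ.2.1 _ _ huv (congrArg Fin.val h), κ.2.2⟩
  invFun c := ⟨fun v => c.1 v, fun _ _ huv h => c.1.valid huv (Fin.ext h), c.2⟩
  left_inv _ := rfl
  right_inv _ := rfl

theorem coloringExponent_mem_finsuppAntidiag {m : ℕ} (c : V → Fin m) :
    coloringExponent (fun v => (c v : ℕ)) ∈ (range m).finsuppAntidiag (Fintype.card V) := by
  refine mem_finsuppAntidiag_iff_degree.mpr ⟨degree_coloringExponent _,
    (support_coloringExponent_subset _).trans fun i hi => ?_⟩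
  obtain ⟨v, -, rfl⟩ := mem_image.mp hi
  exact mem_range.mpr (c v).isLt

theorem evalIndicator_csf (G : SimpleGraph V) (m : ℕ) :
    evalIndicator (range m) (Fintype.card V) (csf G) = Nat.card (G.Coloring (Fin m)) := by
  rw [evalIndicator_apply, Nat.card_eq_fintype_card, ← card_univ (α := G.Coloring (Fin m)),
    card_eq_sum_card_fiberwise
      (f := fun c : G.Coloring (Fin m) => coloringExponent (fun v => (c v : ℕ)))
      fun c _ => coloringExponent_mem_finsuppAntidiag c, Nat.cast_sum]
  refine sum_congr rfl fun d hd => ?_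
  rw [coeff_csf, Nat.card_congr (properColoringEquivOfSupport G
    (mem_finsuppAntidiag_iff_degree.mp hd).2), Nat.card_eq_fintype_card, Fintype.card_subtype]

end ChromaticSymmetric

section TreePolynomial

open Finset MvPowerSeries SimpleGraph

theorem XP_cons (a : ℕ) (μ : Multiset ℕ) : XP (a ::ₘ μ) = csf (pathGraph a) * XP μ := by
  rw [XP, Multiset.map_cons, Multiset.prod_cons, XP]

theorem isHomogeneous_csf_pathGraph (a : ℕ) : (csf (pathGraph a)).IsHomogeneous a := by
  have h := @isHomogeneous_csf (Fin a) _ (pathGraph a)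
  rwa [Fintype.card_fin] at h

theorem isHomogeneous_XP (μ : Multiset ℕ) : (XP μ).IsHomogeneous μ.sum := by
  induction μ using Multiset.induction_on with
  | empty => exact isHomogeneous_one
  | cons a μ ih =>
    rw [XP_cons, Multiset.sum_cons]
    exact IsHomogeneous.mul (isHomogeneous_csf_pathGraph a) ih

theorem evalIndicator_XP (m : ℕ) (μ : Multiset ℕ) :
    evalIndicator (range m) μ.sum (XP μ) =
      (μ.map fun a => (Nat.card ((pathGraph a).Coloring (Fin m)) : ℚ)).prod := by
  induction μ using Multiset.induction_on with
  | empty => exact evalIndicator_one _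
  | cons a μ ih =>
    rw [XP_cons, Multiset.sum_cons,
      evalIndicator_mul _ (isHomogeneous_csf_pathGraph a) (isHomogeneous_XP μ), ih,
      Multiset.map_cons, Multiset.prod_cons, ← evalIndicator_csf, Fintype.card_fin]

/-- The transform `τ_G(x) = (x - 1)^n χ_G(x / (x - 1))` at `x = m / (m - 1)`. -/
theorem eval_basisPoly_mul_pow_eq_card_coloring {V : Type} [Fintype V] (G : SimpleGraph V)
    {n : ℕ} (hn : Fintype.card V = n) {a : n.Partition → ℚ}
    (ha : csf G = ∑ l, a l • XP l.parts) {m : ℕ} (hm : 2 ≤ m) :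
    (basisPoly n a).eval ((m : ℚ) / (m - 1)) * ((m : ℚ) - 1) ^ n =
      Nat.card (G.Coloring (Fin m)) := by
  subst hn
  have hpath : ∀ a, 0 < a →
      (Nat.card ((pathGraph a).Coloring (Fin m)) : ℚ) = m * (m - 1) ^ (a - 1) := by
    intro a ha
    obtain ⟨r, rfl⟩ := Nat.exists_eq_add_one.mpr ha
    rw [card_pathGraph_coloring, Nat.card_eq_fintype_card, Fintype.card_fin, Nat.add_sub_cancel]
    push_cast [Nat.cast_sub (by omega : 1 ≤ m)]
    rfl
  rw [← evalIndicator_csf, ha, map_sum, basisPoly, eval_finsetSum, sum_mul]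
  refine sum_congr rfl fun l _ => ?_
  have h := evalIndicator_XP m l.parts
  rw [l.parts_sum] at h
  rw [map_smul, smul_eq_mul, h, Multiset.map_congr rfl fun a ha => hpath a (l.parts_pos ha),
    Multiset.prod_map_mul_pow_pred _ (Nat.cast_sub_one_ne_zero hm) fun _ ha => l.parts_pos ha,
    l.parts_sum]
  simp [mul_assoc]

end TreePolynomial

/-- clique-gluing formula for the tree polynomial: if `H` is obtained by
gluing `G₁` and `G₂` along a `k`-clique (i.e. there are induced-subgraph embeddings of `G₁`
and `G₂` into `H` covering all of `H`, all edges of `H` lie inside one of the two copies,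
and the overlap of the two copies is a clique on `k` vertices), then
`τ_H · τ_{K_k} = τ_{G₁} · τ_{G₂}`, where each tree polynomial is read off from the
path-basis expansion of the corresponding chromatic symmetric function. -/
theorem stmt_13 {V₁ V₂ W : Type} [Fintype V₁] [Fintype V₂] [Fintype W]
    (G₁ : SimpleGraph V₁) (G₂ : SimpleGraph V₂) (H : SimpleGraph W) (k : ℕ)
    (f₁ : G₁ ↪g H) (f₂ : G₂ ↪g H)
    (hcover : Set.range f₁ ∪ Set.range f₂ = Set.univ)
    (hedges : ∀ u v : W, H.Adj u v →
      (u ∈ Set.range f₁ ∧ v ∈ Set.range f₁) ∨ (u ∈ Set.range f₂ ∧ v ∈ Set.range f₂))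
    (hclique : H.IsClique (Set.range f₁ ∩ Set.range f₂))
    (hk : (Set.range f₁ ∩ Set.range f₂).ncard = k)
    (n₁ n₂ nH : ℕ) (hn₁ : Fintype.card V₁ = n₁) (hn₂ : Fintype.card V₂ = n₂)
    (hnH : Fintype.card W = nH)
    (a₁ : n₁.Partition → ℚ) (ha₁ : csf G₁ = ∑ l : n₁.Partition, a₁ l • XP l.parts)
    (a₂ : n₂.Partition → ℚ) (ha₂ : csf G₂ = ∑ l : n₂.Partition, a₂ l • XP l.parts)
    (aH : nH.Partition → ℚ) (haH : csf H = ∑ l : nH.Partition, aH l • XP l.parts)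
    (aK : k.Partition → ℚ)
    (haK : csf (SimpleGraph.completeGraph (Fin k)) = ∑ l : k.Partition, aK l • XP l.parts) :
    basisPoly nH aH * basisPoly k aK = basisPoly n₁ a₁ * basisPoly n₂ a₂ := by
  have hcard : nH + k = n₁ + n₂ := by
    have h := Set.ncard_union_add_ncard_inter (Set.range f₁) (Set.range f₂)
    rwa [hcover, Set.ncard_univ, hk, Set.ncard_range_of_injective f₁.injective,
      Set.ncard_range_of_injective f₂.injective, Nat.card_eq_fintype_card,
      Nat.card_eq_fintype_card, Nat.card_eq_fintype_card, hnH, hn₁, hn₂] at h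
  refine Polynomial.eq_of_forall_eval_div_sub_one_eq fun m hm => ?_
  have key := congrArg (Nat.cast : ℕ → ℚ) (SimpleGraph.card_coloring_mul_card_coloring_completeGraph
    (α := Fin m) f₁ f₂ hcover hedges hclique hk)
  push_cast at key
  rw [← eval_basisPoly_mul_pow_eq_card_coloring H hnH haH hm,
    ← eval_basisPoly_mul_pow_eq_card_coloring _ (Fintype.card_fin k) haK hm,
    ← eval_basisPoly_mul_pow_eq_card_coloring G₁ hn₁ ha₁ hm,
    ← eval_basisPoly_mul_pow_eq_card_coloring G₂ hn₂ ha₂ hm] at key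
  refine mul_right_cancel₀ (pow_ne_zero (n₁ + n₂) (Nat.cast_sub_one_ne_zero (K := ℚ) hm)) ?_
  rw [Polynomial.eval_mul, Polynomial.eval_mul]
  nth_rw 1 [← hcard]
  linear_combination key
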